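/- arXiv:2308.06402 — 2 statements merged into one kernel-verified Lean document; each statement's English description precedes it below -/
import Mathlib

section
/- A density operator (state) ρ commutes with the rank-one projection P_φ onto a unit vector φ if and only if Γ P_φ ρ P_φ + η P_φ ρ + \bar{η} ρ P_φ = 0, where Γ > 0 and η = −Γ/2 + iγ with γ ∈ ℝ. -/
/-!
Both sides say that `φ` is an eigenvector of `ρ`, necessarily with eigenvalue `a = ⟪φ, ρ φ⟫`,
which is real as `ρ` is symmetric. In that case `ρ P = P ρ = P ρ P = a P`, and the combination
is `(Γ + η + η̄) a P = 0` because `Re η = -Γ / 2`. Conversely, the combination maps `φ` to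
`η̄ (ρ φ - a φ)`, and `η ≠ 0`.
-/

noncomputable section

/-- The rank-one operator `|u⟩⟨v|`. -/
noncomputable def outer {E F : Type*} [NormedAddCommGroup E] [InnerProductSpace ℂ E]
    [NormedAddCommGroup F] [InnerProductSpace ℂ F] (u : F) (v : E) : E →ₗ[ℂ] F where
  toFun x := (inner ℂ v x : ℂ) • u
  map_add' x y := by simp [inner_add_right, add_smul]
  map_smul' c x := by simp [inner_smul_right, smul_smul]

section Outer

variable {E F G : Type*} [NormedAddCommGroup E] [InnerProductSpace ℂ E]
  [NormedAddCommGroup F] [InnerProductSpace ℂ F] [NormedAddCommGroup G] [InnerProductSpace ℂ G]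

theorem outer_apply (u : F) (v x : E) : outer u v x = (inner ℂ v x : ℂ) • u := rfl

theorem outer_smul_left (c : ℂ) (u : F) (v : E) : outer (c • u) v = c • outer u v := by
  ext x
  simp only [outer_apply, LinearMap.smul_apply, smul_comm c]

theorem outer_smul_right (c : ℂ) (u : F) (v : E) :
    outer u (c • v) = starRingEnd ℂ c • outer u v := by
  ext x
  simp only [outer_apply, LinearMap.smul_apply, inner_smul_left, smul_smul]

theorem comp_outer (T : F →ₗ[ℂ] G) (u : F) (v : E) : T ∘ₗ outer u v = outer (T u) v := by
  ext x
  simp only [LinearMap.comp_apply, outer_apply, map_smul]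

theorem outer_comp_of_isSymmetric {T : E →ₗ[ℂ] E} (hT : T.IsSymmetric) (u : F) (v : E) :
    outer u v ∘ₗ T = outer u (T v) := by
  ext x
  simp only [LinearMap.comp_apply, outer_apply, hT v x]

theorem outer_self_apply_self {φ : E} (hφ : ‖φ‖ = 1) : outer φ φ φ = φ := by
  rw [outer_apply, inner_self_eq_one_of_norm_eq_one hφ, one_smul]

theorem outer_self_comp_outer_self {φ : E} (hφ : ‖φ‖ = 1) :
    outer φ φ ∘ₗ outer φ φ = outer φ φ := by
  rw [comp_outer, outer_self_apply_self hφ]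

end Outer

section Symmetric

variable {H : Type*} [NormedAddCommGroup H] [InnerProductSpace ℂ H]
  {ρ : H →ₗ[ℂ] H} {φ : H}

theorem LinearMap.IsSymmetric.comp_outer_self_eq_iff (hρ : ρ.IsSymmetric) (hφ : ‖φ‖ = 1) :
    ρ ∘ₗ outer φ φ = outer φ φ ∘ₗ ρ ↔ ρ φ = (inner ℂ φ (ρ φ) : ℂ) • φ := by
  have hreal : starRingEnd ℂ (inner ℂ φ (ρ φ)) = inner ℂ φ (ρ φ) := by
    rw [inner_conj_symm]; exact hρ φ φ
  rw [comp_outer, outer_comp_of_isSymmetric hρ]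
  constructor
  · intro h
    have := congr($h φ)
    rwa [outer_apply, outer_apply, inner_self_eq_one_of_norm_eq_one hφ, one_smul, hρ] at this
  · intro h
    rw [h, outer_smul_left, outer_smul_right, hreal]

theorem LinearMap.IsSymmetric.apply_eq_inner_smul_iff_combination_eq_zero
    (hρ : ρ.IsSymmetric) (hφ : ‖φ‖ = 1) {Γ η : ℂ} (hsum : Γ + η + starRingEnd ℂ η = 0)
    (hη : η ≠ 0) :
    ρ φ = (inner ℂ φ (ρ φ) : ℂ) • φ ↔
      Γ • (outer φ φ ∘ₗ ρ ∘ₗ outer φ φ) + η • (outer φ φ ∘ₗ ρ) +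
        starRingEnd ℂ η • (ρ ∘ₗ outer φ φ) = 0 := by
  set a : ℂ := inner ℂ φ (ρ φ)
  constructor
  · intro hρφ
    have hρP : ρ ∘ₗ outer φ φ = a • outer φ φ := by rw [comp_outer, hρφ, outer_smul_left]
    rw [← (hρ.comp_outer_self_eq_iff hφ).mpr hρφ, hρP, LinearMap.comp_smul,
      outer_self_comp_outer_self hφ, ← add_smul, ← add_smul, hsum, zero_smul]
  · intro h
    have hφ_image := congr($h φ)
    simp only [LinearMap.add_apply, LinearMap.smul_apply, LinearMap.comp_apply,
      outer_self_apply_self hφ, outer_apply, LinearMap.zero_apply] at hφ_image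
    -- since `Γ + η = -η̄`, the combination maps `φ` to `η̄ • (ρ φ - a • φ)`
    have hkernel : starRingEnd ℂ η • (ρ φ - a • φ) = 0 := by
      linear_combination (norm := module) hφ_image - hsum • (a • φ)
    have hη' : starRingEnd ℂ η ≠ 0 := (map_ne_zero _).mpr hη
    exact sub_eq_zero.mp ((smul_eq_zero.mp hkernel).resolve_left hη')

end Symmetric

theorem stmt7_general {H : Type*} [NormedAddCommGroup H] [InnerProductSpace ℂ H]
    (ρ : H →ₗ[ℂ] H)
    (hsym : ρ.IsSymmetric)
    (φ : H) (hφ : ‖φ‖ = 1)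
    (P : H →ₗ[ℂ] H) (hP : P = outer φ φ)
    (Γ γ : ℝ) (hΓ : 0 < Γ) (η : ℂ) (hη : η = -(Γ / 2 : ℂ) + (γ : ℂ) * Complex.I) :
    ρ ∘ₗ P = P ∘ₗ ρ ↔
      (Γ : ℂ) • (P ∘ₗ ρ ∘ₗ P) + η • (P ∘ₗ ρ) + (starRingEnd ℂ η) • (ρ ∘ₗ P) = 0 := by
  have hsum : (Γ : ℂ) + η + starRingEnd ℂ η = 0 := by
    rw [hη, map_add, map_neg, map_div₀, map_mul, Complex.conj_ofReal, Complex.conj_ofReal,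
      Complex.conj_I, map_ofNat]
    ring
  have hη_ne : η ≠ 0 := fun h0 => by
    have := congr(Complex.re $h0)
    simp [hη] at this
    linarith
  rw [hP, hsym.comp_outer_self_eq_iff hφ,
    hsym.apply_eq_inner_smul_iff_combination_eq_zero hφ hsum hη_ne]

/-- A state `ρ` commutes with the rank-one projection `P_φ` onto a unit
vector `φ` iff `Γ P_φ ρ P_φ + η P_φ ρ + conj η ρ P_φ = 0`, where `Γ > 0` and
`η = -Γ/2 + iγ`. -/
theorem stmt7 {H : Type*} [NormedAddCommGroup H] [InnerProductSpace ℂ H]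
    [FiniteDimensional ℂ H] (ρ : H →ₗ[ℂ] H)
    (hsym : ρ.IsSymmetric) (hpos : ∀ x : H, 0 ≤ (inner ℂ x (ρ x) : ℂ).re)
    (htr : LinearMap.trace ℂ H ρ = 1)
    (φ : H) (hφ : ‖φ‖ = 1)
    (P : H →ₗ[ℂ] H) (hP : P = outer φ φ)
    (Γ γ : ℝ) (hΓ : 0 < Γ) (η : ℂ) (hη : η = -(Γ / 2 : ℂ) + (γ : ℂ) * Complex.I) :
    ρ ∘ₗ P = P ∘ₗ ρ ↔
      (Γ : ℂ) • (P ∘ₗ ρ ∘ₗ P) + η • (P ∘ₗ ρ) + (starRingEnd ℂ η) • (ρ ∘ₗ P) = 0 :=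
  stmt7_general ρ hsym φ hφ P hP Γ γ hΓ η hη
end
end

section
/- Let Z be a partial isometry with Z Z^* = Q and Z^* Z = P orthogonal projections, and let ρ be a positive operator with ρ P = P ρ = ρ restricted appropriately. If Z^* ρ Z = e^{β} ρ P (equivalently ρ Q = e^{β} Z ρ Z^* after transport), then ρ Z = e^{β} Z ρ on the range of P ⊕ Q. -/
/-! Idempotence of `Z†Z` makes `Z` a partial isometry, `Z Z† Z = Z`. Then, as `ρ` commutes
with `Z Z†` and `Z†Z`, `ρ Z = ρ (Z Z†) Z = Z (Z† ρ Z) = e^β Z ρ Z†Z = e^β (Z Z† Z) ρ = e^β Z ρ`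
as operators. -/

namespace LinearMap

variable {𝕜 E F : Type*} [RCLike 𝕜] [NormedAddCommGroup E] [InnerProductSpace 𝕜 E]
  [NormedAddCommGroup F] [InnerProductSpace 𝕜 F] [FiniteDimensional 𝕜 E] [FiniteDimensional 𝕜 F]

theorem comp_adjoint_comp_self_of_idempotent (A : E →ₗ[𝕜] F)
    (h : (adjoint A ∘ₗ A) ∘ₗ (adjoint A ∘ₗ A) = adjoint A ∘ₗ A) :
    A ∘ₗ adjoint A ∘ₗ A = A := by
  ext x
  have hker : x - (adjoint A ∘ₗ A) x ∈ ker (adjoint A ∘ₗ A) := by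
    rw [mem_ker, map_sub, ← comp_apply _ _ x, h, sub_self]
  rw [ker_adjoint_comp_self, mem_ker, map_sub, sub_eq_zero] at hker
  exact hker.symm

theorem comp_eq_smul_comp_of_adjoint_comp_comp_eq (Z ρ : E →ₗ[𝕜] E) (c : 𝕜)
    (hZ : Z ∘ₗ adjoint Z ∘ₗ Z = Z)
    (hcommP : ρ ∘ₗ (adjoint Z ∘ₗ Z) = (adjoint Z ∘ₗ Z) ∘ₗ ρ)
    (hcommQ : ρ ∘ₗ (Z ∘ₗ adjoint Z) = (Z ∘ₗ adjoint Z) ∘ₗ ρ)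
    (hdb : adjoint Z ∘ₗ ρ ∘ₗ Z = c • (ρ ∘ₗ (adjoint Z ∘ₗ Z))) :
    ρ ∘ₗ Z = c • (Z ∘ₗ ρ) :=
  calc ρ ∘ₗ Z = ρ ∘ₗ (Z ∘ₗ adjoint Z) ∘ₗ Z := by rw [comp_assoc, hZ]
    _ = Z ∘ₗ (adjoint Z ∘ₗ ρ ∘ₗ Z) := by rw [← comp_assoc, hcommQ]; rfl
    _ = c • (Z ∘ₗ adjoint Z ∘ₗ Z) ∘ₗ ρ := by rw [hdb, hcommP, comp_smul]; rfl
    _ = c • (Z ∘ₗ ρ) := by rw [hZ]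

end LinearMap

theorem stmt10_general {H : Type*} [NormedAddCommGroup H] [InnerProductSpace ℂ H]
    [FiniteDimensional ℂ H]
    (Z : H →ₗ[ℂ] H) (P Q : H →ₗ[ℂ] H)
    (hP : P = LinearMap.adjoint Z ∘ₗ Z) (hQ : Q = Z ∘ₗ LinearMap.adjoint Z)
    (hPidem : P ∘ₗ P = P)
    (ρ : H →ₗ[ℂ] H)
    (hcommP : ρ ∘ₗ P = P ∘ₗ ρ) (hcommQ : ρ ∘ₗ Q = Q ∘ₗ ρ)
    (β : ℝ)
    (hdb : LinearMap.adjoint Z ∘ₗ ρ ∘ₗ Z = (Real.exp β : ℂ) • (ρ ∘ₗ P)) :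
    ∀ x ∈ (LinearMap.range P ⊔ LinearMap.range Q : Submodule ℂ H),
      ρ (Z x) = (Real.exp β : ℂ) • Z (ρ x) := by
  subst hP hQ
  have hZ := Z.comp_adjoint_comp_self_of_idempotent hPidem
  have hint := Z.comp_eq_smul_comp_of_adjoint_comp_comp_eq ρ _ hZ hcommP hcommQ hdb
  exact fun x _ => LinearMap.congr_fun hint x

/-- Let `Z` be a partial isometry with initial projection `P = Z^* Z`
and final projection `Q = Z Z^*`, with `ran P ⊥ ran Q`, and let `ρ` be a positive
operator commuting with `P` and `Q`. If `Z^* ρ Z = e^β ρ P`, then `ρ Z = e^β Z ρ`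
on the range of `P ⊕ Q`. -/
theorem stmt10 {H : Type*} [NormedAddCommGroup H] [InnerProductSpace ℂ H]
    [FiniteDimensional ℂ H]
    (Z : H →ₗ[ℂ] H) (P Q : H →ₗ[ℂ] H)
    (hP : P = LinearMap.adjoint Z ∘ₗ Z) (hQ : Q = Z ∘ₗ LinearMap.adjoint Z)
    (hPidem : P ∘ₗ P = P) (hQidem : Q ∘ₗ Q = Q)
    (hPQ : P ∘ₗ Q = 0)
    (ρ : H →ₗ[ℂ] H)
    (hsym : ρ.IsSymmetric) (hpos : ∀ x : H, 0 ≤ (inner ℂ x (ρ x) : ℂ).re)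
    (hcommP : ρ ∘ₗ P = P ∘ₗ ρ) (hcommQ : ρ ∘ₗ Q = Q ∘ₗ ρ)
    (β : ℝ)
    (hdb : LinearMap.adjoint Z ∘ₗ ρ ∘ₗ Z = (Real.exp β : ℂ) • (ρ ∘ₗ P)) :
    ∀ x ∈ (LinearMap.range P ⊔ LinearMap.range Q : Submodule ℂ H),
      ρ (Z x) = (Real.exp β : ℂ) • Z (ρ x) :=
  stmt10_general Z P Q hP hQ hPidem ρ hcommP hcommQ β hdb
end
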